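/- For any π₁, π₂ ∈ S_n, there exists 0 ≤ j < n such that inv(π₁·c_n^j·π₂^{-1}) ≤ (3n² − 4n + 1)/8. -/

import Mathlib

open Finset

def inversions {n : ℕ} (π : Equiv.Perm (Fin n)) : ℕ :=
  (Finset.univ.filter (fun p : Fin n × Fin n => p.1 < p.2 ∧ π p.2 < π p.1)).card

def winv {n : ℕ} (π : Equiv.Perm (Fin n)) : ℤ :=
  ∑ p ∈ Finset.univ.filter (fun p : Fin n × Fin n => p.1 < p.2 ∧ π p.2 < π p.1),
    ((π p.1 : ℤ) - (π p.2 : ℤ))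

def cwinv {n : ℕ} (π : Equiv.Perm (Fin n)) : ℤ :=
  n * inversions π - 2 * winv π

/-!
Write `longArc x y` for the larger of the two cyclic distances between `x` and `y` in `Fin n`.
For a permutation `τ` and positions `p < q`, an inversion satisfies
`n ≤ longArc (τ p) (τ q) + τ p - τ q`, and a non-inversion
`0 ≤ longArc (τ p) (τ q) + τ p - τ q`.
Summing, `n * inv τ ≤ V + D τ`, where `V = ∑_{p<q} longArc p q` does not depend on `τ`
(`longArc` is symmetric) and `D τ = ∑_{p<q} (τ p - τ q)` is linear in the values of `τ`.
Along the rotations `π₁ * c_n ^ j * π₂⁻¹`, `j < n`, each position takes every value once,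
so the `D` terms sum to zero and some rotation has `n * inv ≤ V`. All rows of `longArc` are
rotations of each other, which gives `8 V = n (3 n² - 4 n + n % 2)`.
-/

section PairSums

variable {α M : Type*} [LinearOrder α] [Fintype α]

theorem two_nsmul_sum_lt_add_sum_diag [AddCommMonoid M] (g : α → α → M)
    (hg : ∀ a b, g a b = g b a) :
    2 • ∑ p ∈ univ.filter (fun p : α × α => p.1 < p.2), g p.1 p.2 + ∑ a, g a a
      = ∑ a, ∑ b, g a b := by
  have split : ∀ a b, g a b = ((if a < b then g a b else 0) + (if b < a then g b a else 0))
      + if a = b then g a b else 0 := by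
    intro a b
    rcases lt_trichotomy a b with h | rfl | h
    · simp [h, h.ne, h.not_gt]
    · simp
    · simp [h, h.ne', h.not_gt, hg a b]
  simp_rw [sum_congr rfl fun a _ => sum_congr rfl fun b _ => split a b,
    sum_add_distrib, sum_ite_eq, mem_univ, if_true]
  rw [sum_comm (f := fun a b => if b < a then g b a else 0), sum_filter,
    Fintype.sum_prod_type, two_nsmul]

theorem sum_lt_comp_perm [AddCancelCommMonoid M] [IsAddTorsionFree M] (σ : Equiv.Perm α)
    (g : α → α → M) (hg : ∀ a b, g a b = g b a) :
    ∑ p ∈ univ.filter (fun p : α × α => p.1 < p.2), g (σ p.1) (σ p.2)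
      = ∑ p ∈ univ.filter (fun p : α × α => p.1 < p.2), g p.1 p.2 := by
  have hsum : ∑ a, ∑ b, g (σ a) (σ b) = ∑ a, ∑ b, g a b := by
    rw [← Equiv.sum_comp σ (fun a => ∑ b, g a b)]
    exact Fintype.sum_congr _ _ fun a => Equiv.sum_comp σ (g (σ a))
  have h := two_nsmul_sum_lt_add_sum_diag (fun a b => g (σ a) (σ b)) fun a b => hg _ _
  rw [Equiv.sum_comp σ (fun a => g a a), hsum, ← two_nsmul_sum_lt_add_sum_diag g hg] at h
  exact nsmul_right_injective two_ne_zero (add_right_cancel h)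

end PairSums

section Cyclic

open Fin.NatCast

variable {n : ℕ}

def longArc (x y : Fin n) : ℕ := max (x - y).val (y - x).val

theorem longArc_comm (x y : Fin n) : longArc x y = longArc y x := max_comm _ _

theorem Fin.intCast_val_sub (a b : Fin n) :
    ((a - b).val : ℤ) = a.val - b.val + if a < b then (n : ℤ) else 0 := by
  have hb := b.isLt
  split_ifs with h
  · have h' : a.val < b.val := h
    rw [Fin.coe_sub_iff_lt.mpr h]
    omega
  · have h' : b.val ≤ a.val := not_lt.mp h
    rw [Fin.coe_sub_iff_le.mpr (not_lt.mp h)]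
    omega

theorem natCast_mul_ite_lt_le_longArc (x y : Fin n) :
    (n : ℤ) * (if y < x then 1 else 0) ≤ longArc x y + x.val - y.val := by
  have hsub := Fin.intCast_val_sub y x
  have hle : (y - x).val ≤ longArc x y := le_max_right _ _
  split_ifs at hsub ⊢ <;> omega

theorem finRotate_pow_apply [NeZero n] (j : ℕ) (x : Fin n) :
    (finRotate n ^ j) x = x + (j : Fin n) := by
  induction j with
  | zero => simp
  | succ j ih => rw [pow_succ', Equiv.Perm.mul_apply, ih, finRotate_apply, Nat.cast_succ, add_assoc]

theorem sum_range_finRotate_pow_apply [NeZero n] {M : Type*} [AddCommMonoid M] (f : Fin n → M)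
    (x : Fin n) : ∑ j ∈ range n, f ((finRotate n ^ j) x) = ∑ v, f v := by
  simp_rw [finRotate_pow_apply]
  rw [← Fin.sum_univ_eq_sum_range (fun j => f (x + j))]
  simp only [Fin.cast_val_eq_self]
  exact Equiv.sum_comp (Equiv.addLeft x) f

theorem sum_longArc_right [NeZero n] (a : Fin n) :
    ∑ b, longArc a b = ∑ d, longArc (0 : Fin n) d := by
  rw [← Equiv.sum_comp (Equiv.addLeft a)]
  simp [longArc]

theorem four_mul_sum_range_max_sub : ∀ n : ℕ,
    4 * ∑ d ∈ range n, max (n - d) d = 3 * n ^ 2 + n % 2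
  | 0 => by simp
  | 1 => by simp
  | n + 2 => by
    have ih := four_mul_sum_range_max_sub n
    have hshift : ∀ d, max (n + 2 - (d + 1)) (d + 1) = max (n - d) d + 1 := by intro d; omega
    rw [sum_range_succ', sum_range_succ]
    simp only [hshift, sum_add_distrib, sum_const, card_range, smul_eq_mul, mul_one]
    have hsq : (n + 2) ^ 2 = n ^ 2 + 4 * n + 4 := by ring
    omega

theorem four_mul_sum_longArc_zero [NeZero n] :
    4 * ∑ d : Fin n, longArc (0 : Fin n) d + 4 * n = 3 * n ^ 2 + n % 2 := by
  have hterm : ∀ d : Fin n,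
      max (n - d.val) d.val = longArc (0 : Fin n) d + if d = 0 then n else 0 := by
    intro d
    simp only [longArc, zero_sub, sub_zero, Fin.val_neg]
    split_ifs with h <;> simp [h]
  rw [← four_mul_sum_range_max_sub n, ← Fin.sum_univ_eq_sum_range (fun d => max (n - d) d),
    sum_congr rfl fun d _ => hterm d, sum_add_distrib, sum_ite_eq', if_pos (mem_univ _)]
  ring

theorem eight_mul_sum_longArc_add_le [NeZero n] :
    8 * ∑ p ∈ univ.filter (fun p : Fin n × Fin n => p.1 < p.2), longArc p.1 p.2 + 4 * n ^ 2
      ≤ 3 * n ^ 3 + n := by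
  have hdouble := two_nsmul_sum_lt_add_sum_diag (fun a b : Fin n => longArc a b) longArc_comm
  have hdiag : ∑ a : Fin n, longArc a a = 0 := by simp [longArc]
  rw [hdiag, add_zero, sum_congr rfl fun a _ => sum_longArc_right a, sum_const, card_univ,
    Fintype.card_fin, smul_eq_mul, smul_eq_mul] at hdouble
  have hrow := four_mul_sum_longArc_zero (n := n)
  have hpar : n % 2 ≤ 1 := Nat.le_of_lt_succ (Nat.mod_lt n two_pos)
  nlinarith

def pairDiffSum (τ : Equiv.Perm (Fin n)) : ℤ :=
  ∑ p ∈ univ.filter (fun p : Fin n × Fin n => p.1 < p.2), (((τ p.1).val : ℤ) - (τ p.2).val)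

theorem natCast_mul_inversions_le (τ : Equiv.Perm (Fin n)) :
    (n : ℤ) * inversions τ
      ≤ ∑ p ∈ univ.filter (fun p : Fin n × Fin n => p.1 < p.2), (longArc p.1 p.2 : ℤ)
        + pairDiffSum τ := by
  have hinv : (inversions τ : ℤ) = ∑ p ∈ univ.filter (fun p : Fin n × Fin n => p.1 < p.2),
      if τ p.2 < τ p.1 then 1 else 0 := by
    rw [inversions, ← filter_filter, card_filter]
    push_cast
    rfl
  rw [hinv, mul_sum, pairDiffSum,
    ← sum_lt_comp_perm τ (fun a b => (longArc a b : ℤ)) fun a b => by rw [longArc_comm],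
    ← sum_add_distrib]
  exact sum_le_sum fun p _ => (natCast_mul_ite_lt_le_longArc _ _).trans_eq (by ring)

theorem sum_range_pairDiffSum_rotate [NeZero n] (π₁ π₂ : Equiv.Perm (Fin n)) :
    ∑ j ∈ range n, pairDiffSum (π₁ * finRotate n ^ j * π₂⁻¹) = 0 := by
  unfold pairDiffSum
  rw [sum_comm]
  refine sum_eq_zero fun p _ => ?_
  simp only [sum_sub_distrib, Equiv.Perm.mul_apply,
    sum_range_finRotate_pow_apply fun v => ((π₁ v).val : ℤ), sub_self]

theorem exists_rotate_natCast_mul_inversions_le [NeZero n]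
    (π₁ π₂ : Equiv.Perm (Fin n)) :
    ∃ j < n, (n : ℤ) * inversions (π₁ * finRotate n ^ j * π₂⁻¹)
      ≤ ∑ p ∈ univ.filter (fun p : Fin n × Fin n => p.1 < p.2), (longArc p.1 p.2 : ℤ) := by
  obtain ⟨j, hj, hle⟩ := exists_le_of_sum_le (nonempty_range_iff.mpr (NeZero.ne n)) <|
    calc ∑ j ∈ range n, (n : ℤ) * inversions (π₁ * finRotate n ^ j * π₂⁻¹)
        ≤ ∑ j ∈ range n, (∑ p ∈ univ.filter (fun p : Fin n × Fin n => p.1 < p.2),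
            (longArc p.1 p.2 : ℤ) + pairDiffSum (π₁ * finRotate n ^ j * π₂⁻¹)) :=
          sum_le_sum fun j _ => natCast_mul_inversions_le _
      _ = ∑ _j ∈ range n, ∑ p ∈ univ.filter (fun p : Fin n × Fin n => p.1 < p.2),
            (longArc p.1 p.2 : ℤ) := by
          rw [sum_add_distrib, sum_range_pairDiffSum_rotate, add_zero]
  exact ⟨j, mem_range.mp hj, hle⟩

end Cyclic

theorem diameter_upper {n : ℕ} (hn : 0 < n) (π₁ π₂ : Equiv.Perm (Fin n)) :
    ∃ j < n, 8 * (inversions (π₁ * (finRotate n) ^ j * π₂⁻¹) : ℤ)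
      ≤ 3 * n ^ 2 - 4 * n + 1 := by
  have : NeZero n := ⟨hn.ne'⟩
  obtain ⟨j, hj, hle⟩ := exists_rotate_natCast_mul_inversions_le π₁ π₂
  refine ⟨j, hj, le_of_mul_le_mul_left ?_ (by exact_mod_cast hn : (0 : ℤ) < n)⟩
  have hV : 8 * ∑ p ∈ univ.filter (fun p : Fin n × Fin n => p.1 < p.2), (longArc p.1 p.2 : ℤ)
      + 4 * n ^ 2 ≤ 3 * n ^ 3 + n := by
    exact_mod_cast eight_mul_sum_longArc_add_le
  linear_combination 8 * hle + hV
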